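/- Let G be a finite simple graph such that ω(G − v) = ω(G) for every vertex v of G. Then the complement of G contains a matching of size ω(G); in particular, G has at least 2·ω(G) vertices. -/
import Mathlib


open SimpleGraph

variable {V : Type*} {W : Type*}

open Classical in
/-- Update an edge-coloring by giving the pair `e` the color `col`. -/
noncomputable def addColor (c : Sym2 V → ℕ) (e : Sym2 V) (col : ℕ) : Sym2 V → ℕ :=
  Function.update c e col

/-- The edge-colored graph `(G, c)` contains a rainbow `k`-clique avoiding all vertices
in `A` and using no color from `C`. -/
def HasRainbowKClique (G : SimpleGraph V) (c : Sym2 V → ℕ) (k : ℕ)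
    (A : Set V) (C : Set ℕ) : Prop :=
  ∃ f : Fin k ↪ V, (∀ i, f i ∉ A) ∧ (∀ i j, i ≠ j → G.Adj (f i) (f j)) ∧
    (∀ i j, i ≠ j → c s(f i, f j) ∉ C) ∧
    (∀ i j i' j', i ≠ j → i' ≠ j' → c s(f i, f j) = c s(f i', f j') → s(i, j) = s(i', j'))

/-- The edge-colored graph `(G, c)` contains a rainbow `k`-clique using the pair `e`. -/
def HasRainbowKCliqueOn (G : SimpleGraph V) (c : Sym2 V → ℕ) (k : ℕ) (e : Sym2 V) : Prop :=
  ∃ f : Fin k ↪ V, (∀ i j, i ≠ j → G.Adj (f i) (f j)) ∧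
    (∃ i j, i ≠ j ∧ s(f i, f j) = e) ∧
    (∀ i j i' j', i ≠ j → i' ≠ j' → c s(f i, f j) = c s(f i', f j') → s(i, j) = s(i', j'))

/-- The edge-colored graph `(G, c)` is `R(K_r)`-saturated: it has no rainbow `K_r`, and
adding any non-edge in any color creates a rainbow `K_r`. -/
def RKSat (r : ℕ) (G : SimpleGraph V) (c : Sym2 V → ℕ) : Prop :=
  ¬ HasRainbowKClique G c r ∅ ∅ ∧
  ∀ u v : V, u ≠ v → ¬ G.Adj u v → ∀ col : ℕ,
    HasRainbowKClique (G ⊔ fromEdgeSet {s(u, v)}) (addColor c s(u, v) col) r ∅ ∅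

/-- The edge-colored graph `(G, c)` is `R(K_r)`-semisaturated: adding any non-edge in any
color creates a rainbow `K_r` using the new edge. -/
def RKSemiSat (r : ℕ) (G : SimpleGraph V) (c : Sym2 V → ℕ) : Prop :=
  ∀ u v : V, u ≠ v → ¬ G.Adj u v → ∀ col : ℕ,
    HasRainbowKCliqueOn (G ⊔ fromEdgeSet {s(u, v)}) (addColor c s(u, v) col) r s(u, v)

/-- The rainbow saturation number of `K_r` on `n` vertices. -/
noncomputable def rsatK (r n : ℕ) : ℕ :=
  sInf {m | ∃ (G : SimpleGraph (Fin n)) (c : Sym2 (Fin n) → ℕ),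
    RKSat r G c ∧ G.edgeSet.ncard = m}

/-- The rainbow semisaturation number of `K_r` on `n` vertices. -/
noncomputable def rssatK (r n : ℕ) : ℕ :=
  sInf {m | ∃ (G : SimpleGraph (Fin n)) (c : Sym2 (Fin n) → ℕ),
    RKSemiSat r G c ∧ G.edgeSet.ncard = m}

/-- Membership in the class `F̂_k`. -/
def FHat (k : ℕ) (G : SimpleGraph V) (c : Sym2 V → ℕ) : Prop :=
  ¬ HasRainbowKClique G c (k + 1) ∅ ∅ ∧
  (∀ v : V, HasRainbowKClique G c k {v} ∅) ∧
  (∀ col : ℕ, HasRainbowKClique G c k ∅ {col})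

/-- `f(k)`: the minimum number of vertices of an edge-colored graph in `F̂_k`. -/
noncomputable def fF (k : ℕ) : ℕ :=
  sInf {m | ∃ (G : SimpleGraph (Fin m)) (c : Sym2 (Fin m) → ℕ), FHat k G c}

/-- `g'(k)`: the minimum number of edges of an `f(k)`-vertex edge-colored graph in `F̂_k`. -/
noncomputable def gF' (k : ℕ) : ℕ :=
  sInf {m | ∃ (G : SimpleGraph (Fin (fF k))) (c : Sym2 (Fin (fF k)) → ℕ),
    FHat k G c ∧ G.edgeSet.ncard = m}

/-- `g(k)`: the minimum number of edges of an `f(k)`-vertex edge-colored graph in `F̂_k`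
which is moreover `R(K_{k+1})`-saturated. -/
noncomputable def gF (k : ℕ) : ℕ :=
  sInf {m | ∃ (G : SimpleGraph (Fin (fF k))) (c : Sym2 (Fin (fF k)) → ℕ),
    FHat k G c ∧ RKSat (k + 1) G c ∧ G.edgeSet.ncard = m}

/-- `G` contains a copy of `H`. -/
def HasCopy (G : SimpleGraph V) (H : SimpleGraph W) : Prop :=
  ∃ f : W ↪ V, ∀ a b, H.Adj a b → G.Adj (f a) (f b)

/-- `G` contains a copy of `H` using the pair `e`. -/
def HasCopyOn (G : SimpleGraph V) (H : SimpleGraph W) (e : Sym2 V) : Prop :=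
  ∃ f : W ↪ V, (∀ a b, H.Adj a b → G.Adj (f a) (f b)) ∧ ∃ a b, H.Adj a b ∧ s(f a, f b) = e

/-- `G` is `H`-saturated. -/
def Saturated (G : SimpleGraph V) (H : SimpleGraph W) : Prop :=
  ¬ HasCopy G H ∧ ∀ u v : V, u ≠ v → ¬ G.Adj u v → HasCopy (G ⊔ fromEdgeSet {s(u, v)}) H

/-- `G` is `H`-semisaturated: adding any non-edge creates a new copy of `H`. -/
def SemiSaturated (G : SimpleGraph V) (H : SimpleGraph W) : Prop :=
  ∀ u v : V, u ≠ v → ¬ G.Adj u v → HasCopyOn (G ⊔ fromEdgeSet {s(u, v)}) H s(u, v)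

/-- It is not possible to remove one edge of `G` and then add two new edges without
creating a new copy of `H` (using one of the added edges). -/
def Pert1 (G : SimpleGraph V) (H : SimpleGraph W) : Prop :=
  ∀ e ∈ G.edgeSet, ∀ e₁ e₂ : Sym2 V, e₁ ≠ e₂ → ¬ e₁.IsDiag → ¬ e₂.IsDiag →
    e₁ ∉ (G.deleteEdges {e}).edgeSet → e₂ ∉ (G.deleteEdges {e}).edgeSet →
    HasCopyOn (G.deleteEdges {e} ⊔ fromEdgeSet {e₁, e₂}) H e₁ ∨
    HasCopyOn (G.deleteEdges {e} ⊔ fromEdgeSet {e₁, e₂}) H e₂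

/-- `G` is `(H,1)`-saturated. -/
def Sat1 (G : SimpleGraph V) (H : SimpleGraph W) : Prop :=
  Saturated G H ∧ Pert1 G H

/-- `G` is `(H,1)`-semisaturated. -/
def SemiSat1 (G : SimpleGraph V) (H : SimpleGraph W) : Prop :=
  SemiSaturated G H ∧ Pert1 G H

/-- The `(K_r,1)`-saturation number on `n` vertices. -/
noncomputable def sat1K (r n : ℕ) : ℕ :=
  sInf {m | ∃ G : SimpleGraph (Fin n), Sat1 G (⊤ : SimpleGraph (Fin r)) ∧ G.edgeSet.ncard = m}

/-- The `(K_r,1)`-semisaturation number on `n` vertices. -/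
noncomputable def ssat1K (r n : ℕ) : ℕ :=
  sInf {m | ∃ G : SimpleGraph (Fin n), SemiSat1 G (⊤ : SimpleGraph (Fin r)) ∧ G.edgeSet.ncard = m}

/-- The join `K_a + K̄_b` of a complete graph on `a` vertices with an edgeless
graph on `b` vertices. -/
def cliqueJoinEmpty (a b : ℕ) : SimpleGraph (Fin a ⊕ Fin b) :=
  SimpleGraph.fromRel (fun u _ => u.isLeft = true)

/-- The complete multipartite graph with `r - 2` parts of size `2` and one part of size
`n + 4 - 2r`, i.e. the join of the complement of a perfect matching on `2(r-2)` vertices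
with an edgeless graph. -/
def matchingComplementJoinEmpty (r n : ℕ) :
    SimpleGraph ((Fin (r - 2) × Fin 2) ⊕ Fin (n + 4 - 2 * r)) :=
  SimpleGraph.fromRel (fun u v =>
    match u, v with
    | Sum.inl x, Sum.inl y => x.1 ≠ y.1
    | Sum.inl _, Sum.inr _ => True
    | Sum.inr _, Sum.inl _ => True
    | Sum.inr _, Sum.inr _ => False)

/-- The edge-colored graph `(G, c)` has a subgraph belonging to `F̂_k` (the subgraph
inherits its edge-colors from `c`). -/
def HasSubgraphInFHat (k : ℕ) (G : SimpleGraph V) (c : Sym2 V → ℕ) : Prop :=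
  ∃ (s : Set V) (H : SimpleGraph s), (∀ a b : s, H.Adj a b → G.Adj a b) ∧
    FHat k H (fun e => c (Sym2.map Subtype.val e))

/-- Membership in the class `F_r`: an `f(r-2)`-vertex edge-colored graph some subgraph of
which lies in `F̂_{r-2}`. -/
def MemFr (r : ℕ) (G : SimpleGraph V) (c : Sym2 V → ℕ) : Prop :=
  (Set.univ : Set V).ncard = fF (r - 2) ∧ HasSubgraphInFHat (r - 2) G c

/-- A rainbow copy of `H` in the edge-colored graph `(G, c)`. -/
def HasRainbowCopy (G : SimpleGraph V) (c : Sym2 V → ℕ) (H : SimpleGraph W) : Prop :=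
  ∃ f : W ↪ V, (∀ a b, H.Adj a b → G.Adj (f a) (f b)) ∧
    (∀ a b a' b', H.Adj a b → H.Adj a' b' →
      c s(f a, f b) = c s(f a', f b') → s(a, b) = s(a', b'))

/-- A rainbow copy of `H` in `(G, c)` using the pair `e`. -/
def HasRainbowCopyOn (G : SimpleGraph V) (c : Sym2 V → ℕ) (H : SimpleGraph W)
    (e : Sym2 V) : Prop :=
  ∃ f : W ↪ V, (∀ a b, H.Adj a b → G.Adj (f a) (f b)) ∧
    (∃ a b, H.Adj a b ∧ s(f a, f b) = e) ∧
    (∀ a b a' b', H.Adj a b → H.Adj a' b' →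
      c s(f a, f b) = c s(f a', f b') → s(a, b) = s(a', b'))

/-- The edge-colored graph `(G, c)` is `R(H)`-saturated. -/
def RSat (G : SimpleGraph V) (c : Sym2 V → ℕ) (H : SimpleGraph W) : Prop :=
  ¬ HasRainbowCopy G c H ∧
  ∀ u v : V, u ≠ v → ¬ G.Adj u v → ∀ col : ℕ,
    HasRainbowCopy (G ⊔ fromEdgeSet {s(u, v)}) (addColor c s(u, v) col) H

/-- The edge-colored graph `(G, c)` is `R(H)`-semisaturated. -/
def RSemiSat (G : SimpleGraph V) (c : Sym2 V → ℕ) (H : SimpleGraph W) : Prop :=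
  ∀ u v : V, u ≠ v → ¬ G.Adj u v → ∀ col : ℕ,
    HasRainbowCopyOn (G ⊔ fromEdgeSet {s(u, v)}) (addColor c s(u, v) col) H s(u, v)

/-- `sat(R(K_n), R(K_r))`: the minimum number of edges of an `n`-vertex graph `G` such
that `G`, rainbow colored, is `R(K_r)`-saturated. -/
noncomputable def satRK (r n : ℕ) : ℕ :=
  sInf {m | ∃ (G : SimpleGraph (Fin n)) (c : Sym2 (Fin n) → ℕ),
    Set.InjOn c G.edgeSet ∧ RKSat r G c ∧ G.edgeSet.ncard = m}

/-- `G` is `(H,k)`-saturated. -/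
def SatK (k : ℕ) (G : SimpleGraph V) (H : SimpleGraph W) : Prop :=
  ¬ HasCopy G H ∧
  ∀ D : Finset (Sym2 V), D.card = k → (↑D : Set (Sym2 V)) ⊆ G.edgeSet →
  ∀ A : Finset (Sym2 V), A.card = k + 1 → (∀ e ∈ A, ¬ e.IsDiag) →
    (∀ e ∈ A, e ∉ (G.deleteEdges ↑D).edgeSet) →
    HasCopy (G.deleteEdges ↑D ⊔ fromEdgeSet ↑A) H

/-- `sat_k(n, H)`. -/
noncomputable def satKnum (k n : ℕ) (H : SimpleGraph W) : ℕ :=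
  sInf {m | ∃ G : SimpleGraph (Fin n), SatK k G H ∧ G.edgeSet.ncard = m}


private lemma clique_erase {V : Type} [DecidableEq V] {G : SimpleGraph V} {k : ℕ} {s : Finset V} {a : V}
    (hs : G.IsNClique (k+1) s) (ha : a ∈ s) : G.IsNClique k (s.erase a) := by
  constructor
  · exact hs.1.subset (by simp)
  · rw [Finset.card_erase_of_mem ha, hs.2]; omega


private lemma matching_main {V : Type} [Fintype V] (G : SimpleGraph V) :
    ∀ (n k : ℕ) (A : Finset V),
      A.card ≤ n →
      (∀ s : Finset V, s ⊆ A → ¬ G.IsNClique (k+1) s) →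
      (∀ v ∈ A, ∃ s : Finset V, s ⊆ A ∧ G.IsNClique k s ∧ v ∉ s) →
      (∃ s : Finset V, s ⊆ A ∧ G.IsNClique k s) →
      ∃ M : Finset (Sym2 V), M.card = k ∧
        (∀ e ∈ M, e ∈ Gᶜ.edgeSet ∧ ∀ x ∈ e, x ∈ A) ∧
        (∀ e₁ ∈ M, ∀ e₂ ∈ M, e₁ ≠ e₂ → ∀ x : V, x ∈ e₁ → x ∉ e₂) ∧
        2 * k ≤ A.card := by
  classical
  intro n
  induction n with
  | zero =>
    intro k A hA HC H1 hex
    match k with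
    | 0 => exact ⟨∅, by simp⟩
    | k + 1 =>
      obtain ⟨s, hsA, hs⟩ := hex
      have hne : s.Nonempty := by rw [← Finset.card_pos, hs.2]; omega
      obtain ⟨a, ha⟩ := hne
      have haA : a ∈ A := hsA ha
      have : A = ∅ := Finset.card_eq_zero.mp (Nat.le_zero.mp hA)
      simp_all
  | succ n ih =>
    intro k A hA HC H1 hex
    match k with
    | 0 => exact ⟨∅, by simp⟩
    | k + 1 =>
    by_cases hP : ∃ u w : V, u ∈ A ∧ w ∈ A ∧ u ≠ w ∧ ¬ G.Adj u w ∧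
        ∀ s : Finset V, s ⊆ A → G.IsNClique (k+1) s → (u ∈ s ∨ w ∈ s)
    · -- Case B: remove the transversal non-adjacent pair, recurse with k
      obtain ⟨u, w, huA, hwA, huw, hnadj, htrans⟩ := hP
      set A' := (A.erase u).erase w with hA'def
      have hwAu : w ∈ A.erase u := Finset.mem_erase.mpr ⟨huw.symm, hwA⟩
      have hcard1 : (A.erase u).card = A.card - 1 := Finset.card_erase_of_mem huA
      have hcard2 : A'.card = (A.erase u).card - 1 := Finset.card_erase_of_mem hwAu
      have hApos : 1 ≤ (A.erase u).card := Finset.card_pos.mpr ⟨w, hwAu⟩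
      have hA'sub : A' ⊆ A := (Finset.erase_subset _ _).trans (Finset.erase_subset _ _)
      have huA' : u ∉ A' := by
        intro hu
        rw [hA'def, Finset.mem_erase] at hu
        exact Finset.notMem_erase u A hu.2
      have hwA' : w ∉ A' := Finset.notMem_erase w _
      have hA'card : A'.card ≤ n := by omega
      have hnotboth : ∀ s : Finset V, G.IsNClique (k+1) s → u ∈ s → w ∈ s → False := by
        intro s hs hus hws
        exact hnadj (hs.1 hus hws huw)
      have herase : ∀ s : Finset V, s ⊆ A → G.IsNClique (k+1) s →
          ∃ t : Finset V, t ⊆ A' ∧ G.IsNClique k t ∧ t ⊆ s := by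
        intro s hsA hs
        rcases htrans s hsA hs with hu | hw
        · have hwns : w ∉ s := fun hws => hnotboth s hs hu hws
          refine ⟨s.erase u, ?_, clique_erase hs hu, Finset.erase_subset _ _⟩
          rw [hA'def, Finset.subset_erase, Finset.subset_erase]
          exact ⟨⟨(Finset.erase_subset _ _).trans hsA, Finset.notMem_erase _ _⟩,
            fun hwm => hwns (Finset.mem_of_mem_erase hwm)⟩
        · have huns : u ∉ s := fun hus => hnotboth s hs hus hw
          refine ⟨s.erase w, ?_, clique_erase hs hw, Finset.erase_subset _ _⟩
          rw [hA'def, Finset.subset_erase, Finset.subset_erase]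
          exact ⟨⟨(Finset.erase_subset _ _).trans hsA,
            fun hum => huns (Finset.mem_of_mem_erase hum)⟩, Finset.notMem_erase _ _⟩
      have HC' : ∀ s : Finset V, s ⊆ A' → ¬ G.IsNClique (k+1) s := by
        intro s hsA' hs
        rcases htrans s (hsA'.trans hA'sub) hs with hu | hw
        · exact huA' (hsA' hu)
        · exact hwA' (hsA' hw)
      have H1' : ∀ v ∈ A', ∃ s : Finset V, s ⊆ A' ∧ G.IsNClique k s ∧ v ∉ s := by
        intro v hv
        obtain ⟨s, hsA, hs, hvs⟩ := H1 v (hA'sub hv)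
        obtain ⟨t, htA', ht, hts⟩ := herase s hsA hs
        exact ⟨t, htA', ht, fun hvt => hvs (hts hvt)⟩
      have hex' : ∃ s : Finset V, s ⊆ A' ∧ G.IsNClique k s := by
        obtain ⟨s, hsA, hs⟩ := hex
        obtain ⟨t, htA', ht, -⟩ := herase s hsA hs
        exact ⟨t, htA', ht⟩
      obtain ⟨M', hM'card, hM'mem, hM'disj, hM'bound⟩ := ih k A' hA'card HC' H1' hex'
      have hnew : s(u, w) ∉ M' := by
        intro hmem
        exact huA' ((hM'mem _ hmem).2 u (by simp))
      refine ⟨insert s(u, w) M', ?_, ?_, ?_, ?_⟩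
      · rw [Finset.card_insert_of_notMem hnew, hM'card]
      · intro e he
        rcases Finset.mem_insert.mp he with rfl | he'
        · constructor
          · rw [SimpleGraph.mem_edgeSet, SimpleGraph.compl_adj]
            exact ⟨huw, hnadj⟩
          · intro x hx
            rcases Sym2.mem_iff.mp hx with rfl | rfl
            · exact huA
            · exact hwA
        · exact ⟨(hM'mem e he').1, fun x hx => hA'sub ((hM'mem e he').2 x hx)⟩
      · intro e₁ he₁ e₂ he₂ hne x hx1
        rcases Finset.mem_insert.mp he₁ with rfl | he₁' <;>
          rcases Finset.mem_insert.mp he₂ with rfl | he₂'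
        · exact absurd rfl hne
        · intro hx2
          have hxA' := (hM'mem _ he₂').2 x hx2
          rcases Sym2.mem_iff.mp hx1 with rfl | rfl
          · exact huA' hxA'
          · exact hwA' hxA'
        · intro hx2
          have hxA' := (hM'mem _ he₁').2 x hx1
          rcases Sym2.mem_iff.mp hx2 with rfl | rfl
          · exact huA' hxA'
          · exact hwA' hxA'
        · exact hM'disj e₁ he₁' e₂ he₂' hne x hx1
      · omega
    · -- no transversal non-adjacent pair; find v with I_v = ∅ and recurse on A.erase v
      have hclaim : ∃ v ∈ A, ∀ x ∈ A, ∃ s : Finset V,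
          s ⊆ A ∧ G.IsNClique (k+1) s ∧ v ∉ s ∧ x ∉ s := by
        by_contra hcl
        push_neg at hcl
        set I : V → Finset V := fun v => A.filter
          (fun x => ∀ s : Finset V, s ⊆ A → G.IsNClique (k+1) s → v ∉ s → x ∈ s) with hIdef
        have hI : ∀ v ∈ A, ∃ x, x ∈ I v := by
          intro v hv
          obtain ⟨x, hxA, hx⟩ := hcl v hv
          exact ⟨x, Finset.mem_filter.mpr ⟨hxA, hx⟩⟩
        have desc : ∀ m : ℕ, ∀ v ∈ A, (I v).card ≤ m → False := by
          intro m
          induction m with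
          | zero =>
            intro v hv hm
            obtain ⟨x, hx⟩ := hI v hv
            have : (I v).card ≠ 0 := Finset.card_ne_zero_of_mem hx
            omega
          | succ m ihm =>
            intro v hv hm
            obtain ⟨x, hxI⟩ := hI v hv
            have hxA : x ∈ A := (Finset.mem_filter.mp hxI).1
            have hxpred := (Finset.mem_filter.mp hxI).2
            obtain ⟨s₀, hs₀A, hs₀, hvs₀⟩ := H1 v hv
            have hxs₀ : x ∈ s₀ := hxpred s₀ hs₀A hs₀ hvs₀
            have hxv : x ≠ v := fun h => hvs₀ (h ▸ hxs₀)
            have htransv : ∀ s : Finset V, s ⊆ A → G.IsNClique (k+1) s → v ∈ s ∨ x ∈ s := by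
              intro s hsA hs
              by_cases hvs : v ∈ s
              · exact Or.inl hvs
              · exact Or.inr (hxpred s hsA hs hvs)
            have hadj : G.Adj v x := by
              by_contra hna
              exact hP ⟨v, x, hv, hxA, hxv.symm, hna, htransv⟩
            obtain ⟨K, hKA, hK, hxK⟩ := H1 x hxA
            have hvK : v ∈ K := (htransv K hKA hK).resolve_right hxK
            have hy : ∃ y ∈ K, ¬ G.Adj x y := by
              by_contra hall
              push_neg at hall
              refine HC (insert x K) (Finset.insert_subset hxA hKA) ⟨?_, ?_⟩
              · rw [Finset.coe_insert]
                exact hK.1.insert (fun b hb _ => hall b hb)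
              · rw [Finset.card_insert_of_notMem hxK, hK.2]
            obtain ⟨y, hyK, hynadj⟩ := hy
            have hyA : y ∈ A := hKA hyK
            have hyx : y ≠ x := fun h => hxK (h ▸ hyK)
            have hyv : y ≠ v := fun h => hynadj (h ▸ hadj.symm)
            have key3 : ∀ s : Finset V, s ⊆ A → G.IsNClique (k+1) s → v ∉ s → y ∉ s := by
              intro s hsA hs hvs hys
              have hxs : x ∈ s := hxpred s hsA hs hvs
              exact hynadj (hs.1 hxs hys hyx.symm)
            have hsub : I y ⊆ I v := by
              intro z hz
              have hzA : z ∈ A := (Finset.mem_filter.mp hz).1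
              have hzpred := (Finset.mem_filter.mp hz).2
              refine Finset.mem_filter.mpr ⟨hzA, ?_⟩
              intro s hsA hs hvs
              exact hzpred s hsA hs (key3 s hsA hs hvs)
            have hxny : x ∉ I y := by
              intro hxIy
              have hxpredy := (Finset.mem_filter.mp hxIy).2
              have htransyx : ∀ s : Finset V, s ⊆ A → G.IsNClique (k+1) s →
                  y ∈ s ∨ x ∈ s := by
                intro s hsA hs
                by_cases hys : y ∈ s
                · exact Or.inl hys
                · exact Or.inr (hxpredy s hsA hs hys)
              exact hP ⟨y, x, hyA, hxA, hyx, fun h => hynadj h.symm, htransyx⟩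
            have hstrict : (I y).card < (I v).card :=
              Finset.card_lt_card (Finset.ssubset_iff_of_subset hsub |>.mpr ⟨x, hxI, hxny⟩)
            exact ihm y hyA (by omega)
        obtain ⟨s, hsA, hs⟩ := hex
        have hne : s.Nonempty := by rw [← Finset.card_pos, hs.2]; omega
        obtain ⟨a, ha⟩ := hne
        exact desc (I a).card a (hsA ha) le_rfl
      obtain ⟨v, hvA, hv⟩ := hclaim
      set A' := A.erase v with hA'def
      have hA'sub : A' ⊆ A := Finset.erase_subset _ _
      have hA'card : A'.card ≤ n := by
        have h1 : A'.card = A.card - 1 := Finset.card_erase_of_mem hvA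
        have h2 : 1 ≤ A.card := Finset.card_pos.mpr ⟨v, hvA⟩
        omega
      have HC' : ∀ s : Finset V, s ⊆ A' → ¬ G.IsNClique (k+1+1) s :=
        fun s hsA' => HC s (hsA'.trans hA'sub)
      have H1' : ∀ x ∈ A', ∃ s : Finset V, s ⊆ A' ∧ G.IsNClique (k+1) s ∧ x ∉ s := by
        intro x hx
        obtain ⟨s, hsA, hs, hvs, hxs⟩ := hv x (hA'sub hx)
        exact ⟨s, Finset.subset_erase.mpr ⟨hsA, hvs⟩, hs, hxs⟩
      have hex' : ∃ s : Finset V, s ⊆ A' ∧ G.IsNClique (k+1) s := by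
        obtain ⟨s, hsA, hs, hvs, -⟩ := hv v hvA
        exact ⟨s, Finset.subset_erase.mpr ⟨hsA, hvs⟩, hs⟩
      obtain ⟨M, hMcard, hMmem, hMdisj, hMbound⟩ := ih (k+1) A' hA'card HC' H1' hex'
      refine ⟨M, hMcard, ?_, hMdisj, ?_⟩
      · exact fun e he => ⟨(hMmem e he).1, fun x hx => hA'sub ((hMmem e he).2 x hx)⟩
      · calc 2 * (k+1) ≤ A'.card := hMbound
          _ ≤ A.card := Finset.card_le_card hA'sub

/-- If `ω(G - v) = ω(G)` for every vertex `v`, then the complement of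
`G` contains a matching of size `ω(G)`; in particular `|V(G)| ≥ 2 ω(G)`. -/
theorem complement_matching {V : Type} [Fintype V] (G : SimpleGraph V)
    (h : ∀ v : V, (G.induce {w | w ≠ v}).cliqueNum = G.cliqueNum) :
    (∃ M : Finset (Sym2 V), M.card = G.cliqueNum ∧
      (∀ e ∈ M, e ∈ Gᶜ.edgeSet) ∧
      ∀ e₁ ∈ M, ∀ e₂ ∈ M, e₁ ≠ e₂ → ∀ x : V, x ∈ e₁ → x ∉ e₂) ∧
    2 * G.cliqueNum ≤ Fintype.card V := by
  classical
  set k := G.cliqueNum with hk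
  have hex : ∃ s : Finset V, s ⊆ Finset.univ ∧ G.IsNClique k s := by
    obtain ⟨s, hs⟩ := G.exists_isNClique_cliqueNum
    exact ⟨s, Finset.subset_univ s, hs⟩
  have HC : ∀ s : Finset V, s ⊆ Finset.univ → ¬ G.IsNClique (k+1) s := by
    intro s _ hs
    have hle : s.card ≤ G.cliqueNum := IsClique.card_le_cliqueNum (tc := hs.1)
    rw [hs.2, ← hk] at hle
    omega
  have H1 : ∀ v ∈ (Finset.univ : Finset V),
      ∃ s : Finset V, s ⊆ Finset.univ ∧ G.IsNClique k s ∧ v ∉ s := by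
    intro v _
    haveI : Fintype ({w | w ≠ v} : Set V) := Fintype.ofFinite _
    obtain ⟨s', hs'⟩ := (G.induce {w | w ≠ v}).exists_isNClique_cliqueNum
    rw [h v] at hs'
    refine ⟨s'.map ⟨Subtype.val, Subtype.val_injective⟩, Finset.subset_univ _, ⟨?_, ?_⟩, ?_⟩
    · intro a ha b hb hab
      simp only [Finset.coe_map, Set.mem_image, Finset.mem_coe,
        Function.Embedding.coeFn_mk] at ha hb
      obtain ⟨a', ha', rfl⟩ := ha
      obtain ⟨b', hb', rfl⟩ := hb
      have hab' : a' ≠ b' := fun hh => hab (by rw [hh])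
      have := hs'.1 ha' hb' hab'
      simpa using this
    · rw [Finset.card_map, hs'.2]
    · intro hv
      rw [Finset.mem_map] at hv
      obtain ⟨a', _, ha'⟩ := hv
      exact a'.2 ha'
  obtain ⟨M, hMcard, hMmem, hMdisj, hMbound⟩ :=
    matching_main G (Finset.univ.card) k Finset.univ le_rfl HC H1 hex
  refine ⟨⟨M, hMcard, fun e he => (hMmem e he).1, hMdisj⟩, ?_⟩
  rw [← Finset.card_univ]
  exact hMbound
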